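/- arXiv:2304.09557 — 3 statements merged into one kernel-verified Lean document; each statement's English description precedes it below -/
import Mathlib

section
/- For $a,b\ge 0$ and $c_1,c_2\ge 2$ with $c_1+c_2=a+b+2$, one has $\mathrm{Coef}_{t^{a+1}}\left[\frac{(t-t^{c_1})(t-t^{c_2})}{(1-t)^2}\right] = \min(a,b,c_1-1,c_2-1)$. -/
open Finset Polynomial

/-- For `a, b ≥ 0` and `c₁, c₂ ≥ 2` with `c₁ + c₂ = a + b + 2`,
the coefficient of `t^(a+1)` in `((t - t^c₁)(t - t^c₂))/(1-t)^2
 = (t + ⋯ + t^(c₁-1))(t + ⋯ + t^(c₂-1))` equals `min (a, b, c₁ - 1, c₂ - 1)`. -/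
theorem statement2 (a b c₁ c₂ : ℕ) (hc₁ : 2 ≤ c₁) (hc₂ : 2 ≤ c₂)
    (h : c₁ + c₂ = a + b + 2) :
    ((∑ k ∈ Finset.Icc 1 (c₁ - 1), (Polynomial.X : Polynomial ℕ) ^ k) *
      (∑ k ∈ Finset.Icc 1 (c₂ - 1), (Polynomial.X : Polynomial ℕ) ^ k)).coeff (a + 1) =
    min (min a b) (min (c₁ - 1) (c₂ - 1)) := by
  rw [Polynomial.coeff_mul, Finset.Nat.sum_antidiagonal_eq_sum_range_succ_mk]
  have hterm : ∀ k ∈ Finset.range (a + 1 + 1),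
      (∑ j ∈ Finset.Icc 1 (c₁ - 1), (Polynomial.X : Polynomial ℕ) ^ j).coeff k *
      (∑ j ∈ Finset.Icc 1 (c₂ - 1), (Polynomial.X : Polynomial ℕ) ^ j).coeff (a + 1 - k) =
      if k ∈ Finset.Icc (max 1 (a + 2 - c₂)) (min (c₁ - 1) a) then 1 else 0 := by
    intro k hk
    simp only [Finset.mem_range] at hk
    simp only [Polynomial.finset_sum_coeff, Polynomial.coeff_X_pow,
      Finset.sum_ite_eq, Finset.mem_Icc]
    split_ifs <;> omega
  rw [Finset.sum_congr rfl hterm, Finset.sum_ite_mem]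
  have hsub : Finset.Icc (max 1 (a + 2 - c₂)) (min (c₁ - 1) a) ⊆
      Finset.range (a + 1 + 1) := by
    intro x hx
    simp only [Finset.mem_Icc, Finset.mem_range] at *
    omega
  rw [Finset.inter_eq_right.mpr hsub, Finset.sum_const, Nat.card_Icc, smul_eq_mul, mul_one]
  omega
end

section
/- Let $a\ge 1$, $b\ge 2$ be integers and $Q(t)=\sum_{k=0}^{b-1}(-1)^k\binom{a+b-1}{k}t^{b-1-k}$. Then $Q$ is a polynomial of degree $b-1$ over $\mathbb C$ with $Q(0)\ne 0$, $Q(1)\ne 0$, and $Q$ has no multiple roots; consequently $Q$ has exactly $b-1$ distinct roots in $\mathbb C\setminus\{0,1\}$. -/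
/-!
Write `n = a + b - 1`. The values `Q(0) = (-1)^(b-1) C(n, b-1)` and
`Q(1) = (-1)^(b-1) C(n-1, b-1)` are read off directly, the latter from the partial alternating
sum of binomial coefficients. Separability comes from the first-order differential identity
`n t Q - (t - 1) (a Q + t Q') = (-1)^(b-1) b C(n, b)`, which telescopes term by term: a common
root of `Q` and `Q'` would make the nonzero right-hand side vanish. Over `ℂ` a separable
polynomial of degree `b - 1` has `b - 1` distinct roots.
-/

open Finset Polynomial

noncomputable def alternatingChoosePoly (R : Type*) [CommRing R] (n b : ℕ) : R[X] :=
  ∑ k ∈ range b, C ((-1) ^ k * (n.choose k : R)) * X ^ (b - 1 - k)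

section CommRing

variable {R : Type*} [CommRing R]

theorem Nat.cast_choose_mul_sub (n k : ℕ) :
    (n.choose k : R) * (n - k) = n.choose (k + 1) * (k + 1) := by
  rcases le_or_gt k n with hkn | hnk
  · have := congrArg (Nat.cast : ℕ → R) (Nat.choose_succ_right_eq n k)
    push_cast [Nat.cast_sub hkn] at this
    exact this.symm
  · simp [Nat.choose_eq_zero_of_lt hnk, Nat.choose_eq_zero_of_lt (hnk.trans k.lt_succ_self)]

theorem Polynomial.X_mul_derivative_X_pow (j : ℕ) :
    X * derivative (X ^ j : R[X]) = C (j : R) * X ^ j := by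
  cases j with
  | zero => simp
  | succ j =>
    rw [derivative_X_pow, Nat.add_sub_cancel, map_natCast]
    ring

variable (n b : ℕ)

theorem natDegree_alternatingChoosePoly_le : (alternatingChoosePoly R n b).natDegree ≤ b - 1 :=
  natDegree_sum_le_of_forall_le _ _ fun _ _ => (natDegree_C_mul_X_pow_le _ _).trans (Nat.sub_le _ _)

theorem coeff_alternatingChoosePoly_sub_one (hb : b ≠ 0) :
    (alternatingChoosePoly R n b).coeff (b - 1) = 1 := by
  rw [alternatingChoosePoly, finsetSum_coeff,
    sum_eq_single_of_mem 0 (mem_range.2 (Nat.pos_of_ne_zero hb))]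
  · simp
  · intro k hk hk0
    rw [coeff_C_mul_X_pow, if_neg (by grind)]

theorem natDegree_alternatingChoosePoly [Nontrivial R] (hb : b ≠ 0) :
    (alternatingChoosePoly R n b).natDegree = b - 1 :=
  natDegree_eq_of_le_of_coeff_ne_zero (natDegree_alternatingChoosePoly_le n b)
    (by rw [coeff_alternatingChoosePoly_sub_one n b hb]; exact one_ne_zero)

theorem eval_zero_alternatingChoosePoly (hb : b ≠ 0) :
    (alternatingChoosePoly R n b).eval 0 = (-1) ^ (b - 1) * n.choose (b - 1) := by
  rw [← coeff_zero_eq_eval_zero, alternatingChoosePoly, finsetSum_coeff,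
    sum_eq_single_of_mem (b - 1) (mem_range.2 (by omega))]
  · rw [Nat.sub_self, pow_zero, mul_one, coeff_C_zero]
  · intro k hk hkb
    rw [coeff_C_mul_X_pow, if_neg (by grind)]

theorem eval_one_alternatingChoosePoly (m : ℕ) (hb : b ≠ 0) :
    (alternatingChoosePoly R (m + 1) b).eval 1 = (-1) ^ (b - 1) * m.choose (b - 1) := by
  obtain ⟨b, rfl⟩ := Nat.exists_eq_succ_of_ne_zero hb
  have := congrArg (Int.cast : ℤ → R) (Int.alternating_sum_range_choose_eq_choose (n := m) (m := b))
  simpa [alternatingChoosePoly, eval_finsetSum] using this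

theorem alternatingChoosePoly_differential_identity :
    C (n : R) * X * alternatingChoosePoly R n b
        - (X - 1) * (C ((n : R) + 1 - b) * alternatingChoosePoly R n b
          + X * derivative (alternatingChoosePoly R n b))
      = C (-(-1) ^ b * b * n.choose b : R) := by
  set f : ℕ → R[X] := fun k => C ((-1) ^ k * k * n.choose k : R) * X ^ (b - k)
  -- The `k`-th monomial `mₖ` contributes `k X mₖ + (n - k) mₖ`, and `(n - k) C(n,k) = (k + 1) C(n,k+1)`.
  have term : ∀ k < b,
      C (n : R) * X * (C ((-1) ^ k * (n.choose k : R)) * X ^ (b - 1 - k))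
        - (X - 1) * (C ((n : R) + 1 - b) * (C ((-1) ^ k * (n.choose k : R)) * X ^ (b - 1 - k))
          + X * derivative (C ((-1) ^ k * (n.choose k : R)) * X ^ (b - 1 - k)))
        = f k - f (k + 1) := by
    intro k hk
    obtain ⟨j, rfl⟩ : ∃ j, b = j + k + 1 := ⟨b - 1 - k, by omega⟩
    have hj : j + k + 1 - 1 - k = j := by omega
    have hj' : j + k + 1 - k = j + 1 := by omega
    have hj'' : j + k + 1 - (k + 1) = j := by omega
    rw [derivative_C_mul, hj, mul_left_comm X, X_mul_derivative_X_pow]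
    simp only [f, hj', hj'', map_mul, map_sub, map_add, map_pow, map_neg, map_one, map_natCast]
    push_cast
    linear_combination (-1) ^ k * X ^ j * Nat.cast_choose_mul_sub (R := R[X]) n k
  calc _ = ∑ k ∈ range b, (f k - f (k + 1)) := by
        simp only [alternatingChoosePoly, mul_sum, derivative_sum, ← sum_add_distrib,
          ← sum_sub_distrib]
        exact sum_congr rfl fun k hk => term k (mem_range.1 hk)
    _ = f 0 - f b := sum_range_sub' f b
    _ = _ := by simp [f]

end CommRing

theorem separable_alternatingChoosePoly {K : Type*} [Field K] [CharZero K] {n b : ℕ}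
    (hbn : b ≤ n) (hb : b ≠ 0) : (alternatingChoosePoly K n b).Separable := by
  set c : K := -(-1) ^ b * b * n.choose b
  have hc : c ≠ 0 := by simp [c, hb, (Nat.choose_pos hbn).ne']
  have hinv : C c⁻¹ * C c = 1 := by rw [← C_mul, inv_mul_cancel₀ hc, C_1]
  refine ⟨C c⁻¹ * (C (n : K) * X - (X - 1) * C ((n : K) + 1 - b)), C c⁻¹ * (-(X - 1) * X), ?_⟩
  linear_combination C c⁻¹ * alternatingChoosePoly_differential_identity (R := K) n b + hinv

/-- For `a ≥ 1`, `b ≥ 2` and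
`Q(t) = ∑_{k=0}^{b-1} (-1)^k (a+b-1 choose k) t^(b-1-k) ∈ ℂ[t]`:
`Q` has degree `b-1`, `Q(0) ≠ 0`, `Q(1) ≠ 0`, `Q` has no multiple roots, and
consequently `Q` has exactly `b-1` distinct roots, all in `ℂ \ {0,1}`. -/
theorem statement4 (a b : ℕ) (ha : 1 ≤ a) (hb : 2 ≤ b) :
    ∀ Q : Polynomial ℂ,
      Q = ∑ k ∈ Finset.range b,
            Polynomial.C ((-1 : ℂ) ^ k * ((a + b - 1).choose k : ℂ)) *
              Polynomial.X ^ (b - 1 - k) →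
      Q.natDegree = b - 1 ∧ Q.eval 0 ≠ 0 ∧ Q.eval 1 ≠ 0 ∧ Q.roots.Nodup ∧
        Q.roots.toFinset.card = b - 1 ∧ ∀ z ∈ Q.roots, z ≠ 0 ∧ z ≠ 1 := by
  intro Q hQ
  replace hQ : Q = alternatingChoosePoly ℂ (a + b - 1) b := hQ
  subst hQ
  have hb0 : b ≠ 0 := by omega
  have h0 : (alternatingChoosePoly ℂ (a + b - 1) b).eval 0 ≠ 0 := by
    rw [eval_zero_alternatingChoosePoly _ _ hb0]
    simp [(Nat.choose_pos (by omega : b - 1 ≤ a + b - 1)).ne']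
  have h1 : (alternatingChoosePoly ℂ (a + b - 1) b).eval 1 ≠ 0 := by
    rw [show a + b - 1 = a + b - 2 + 1 by omega, eval_one_alternatingChoosePoly _ _ hb0]
    simp [(Nat.choose_pos (by omega : b - 1 ≤ a + b - 2)).ne']
  have hnodup := nodup_roots (separable_alternatingChoosePoly (K := ℂ) (by omega : b ≤ a + b - 1) hb0)
  refine ⟨natDegree_alternatingChoosePoly _ _ hb0, h0, h1, hnodup, ?_,
    fun z hz => ⟨?_, ?_⟩⟩
  · rw [Multiset.toFinset_card_of_nodup hnodup, IsAlgClosed.card_roots_eq_natDegree,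
      natDegree_alternatingChoosePoly _ _ hb0]
  · rintro rfl
    exact h0 (isRoot_of_mem_roots hz)
  · rintro rfl
    exact h1 (isRoot_of_mem_roots hz)
end

section
/- Let $\lambda(p)=p+\sum_{i\ge1}f_ip^{-i}$ and define $R_{i,j}:=-\mathrm{res}_{p=0}\left(\lambda(p)^j_+\,\partial_p\lambda(p)^i\right)$, where $A_+$ denotes the part of a formal Laurent series with nonnegative powers of $p$. Then $R_{i,j}=R_{j,i}$ for all $i,j\ge 1$. -/
open Finset

noncomputable section

/-- The coefficient ring `ℚ[f₁, f₂, …]` (with `fᵢ = X i`). -/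
abbrev Rf : Type := MvPolynomial ℕ ℚ

/-- We represent formal series `∑_{n ≤ m} aₙ pⁿ` in `p` (finitely many positive powers of `p`,
formal power series in `p⁻¹`) as Laurent series in the variable `q := p⁻¹`:
the coefficient of `pⁿ` is the coefficient of the Laurent series at exponent `-n`. -/
abbrev LS : Type := LaurentSeries Rf

/-- `λ(p) = p + ∑_{i ≥ 1} fᵢ p⁻ⁱ`. -/
def lam : LS :=
  HahnSeries.single (-1 : ℤ) (1 : Rf) +
    HahnSeries.ofPowerSeries ℤ Rf (PowerSeries.mk fun i => if i = 0 then 0 else MvPolynomial.X i)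

/-- `res_{p=0} A`: the coefficient of `p⁻¹` in `A`. -/
def pres (A : LS) : Rf := A.coeff 1

/-- `A₊`: the part of `A` with nonnegative powers of `p`. -/
def plus (A : LS) : LS where
  coeff n := if n ≤ 0 then A.coeff n else 0
  isPWO_support' := A.isPWO_support'.mono (by
    intro n hn
    simp only [Function.mem_support] at hn ⊢
    intro h; apply hn; simp [h])

/-- `∂ₚ A`: the derivative of `A` with respect to `p`. -/
def derivP (A : LS) : LS where
  coeff m := (1 - m) • A.coeff (m - 1)
  isPWO_support' := ((A.isPWO_support'.image_of_monotone
      (f := fun n => n + 1) (fun _ _ h => by dsimp only; omega)).mono (by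
    intro m hm
    simp only [Function.mem_support] at hm
    refine ⟨m - 1, ?_, by ring⟩
    simp only [Function.mem_support]
    intro h; apply hm; rw [h, smul_zero]))

/-- `wᵢ = res_{p=0} λ(p)ⁱ`. -/
def wv (i : ℕ) : Rf := pres (lam ^ i)

/-- `R_{i,j} = -res_{p=0} (λ(p)ʲ₊ ∂ₚ λ(p)ⁱ)`. -/
def Rpq (i j : ℕ) : Rf := - pres (plus (lam ^ j) * derivP (lam ^ i))

end

/-!
Split `A = λⁱ` and `B = λʲ` into their parts `A₊, B₊` with nonnegative powers of `p` and the
remainders `A₋, B₋` with negative powers. Residues of products of two series from the same half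
vanish, and `res ∂ₚ C = 0` gives integration by parts, so
`res (B₊ ∂A) = res (B₊ ∂A₋) = -res (∂B₊ · A₋) = -res (∂B · A₋) = res (A₊ ∂B) - res (A ∂B)`.
Finally `res (λⁱ ∂ₚ λʲ) = 0`, because `(i + j) λⁱ ∂ₚ λʲ = j ∂ₚ λⁱ⁺ʲ`.
-/

open HahnSeries (coeff_add coeff_sub coeff_nsmul coeff_mul coeff_mul_left' coeff_mul_right'
  coeff_single_mul_add coeff_one single)

lemma pres_add (x y : LS) : pres (x + y) = pres x + pres y := coeff_add

lemma pres_sub (x y : LS) : pres (x - y) = pres x - pres y := coeff_sub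

lemma pres_nsmul (n : ℕ) (x : LS) : pres (n • x) = n • pres x := by
  simp only [pres, coeff_nsmul, Pi.smul_apply]

/-- The Euler operator `p ∂ₚ`. -/
noncomputable def euler (A : LS) : LS where
  coeff m := (-m) • A.coeff m
  isPWO_support' := A.isPWO_support'.mono fun m hm h => hm (by simp only [h, smul_zero])

lemma euler_coeff (A : LS) (m : ℤ) : (euler A).coeff m = (-m) • A.coeff m := rfl

lemma support_euler_subset (A : LS) : (euler A).support ⊆ A.support :=
  fun m hm h => hm (by rw [euler_coeff, h, smul_zero])

lemma euler_mul (x y : LS) : euler (x * y) = euler x * y + x * euler y := by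
  ext m : 2
  rw [coeff_add, euler_coeff, coeff_mul, coeff_mul_left' x.isPWO_support (support_euler_subset x),
    coeff_mul_right' y.isPWO_support (support_euler_subset y), ← sum_add_distrib, smul_sum]
  refine sum_congr rfl fun ab hab => ?_
  rw [← (mem_antidiagonal.mp hab).2.2, euler_coeff, euler_coeff, smul_mul_assoc, mul_smul_comm,
    ← add_smul, neg_add]

lemma derivP_eq_single_mul_euler (A : LS) : derivP A = single 1 1 * euler A := by
  ext m : 2
  obtain ⟨n, rfl⟩ : ∃ n, m = n + 1 := ⟨m - 1, by ring⟩
  rw [coeff_single_mul_add, one_mul, euler_coeff]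
  show (1 - (n + 1)) • A.coeff (n + 1 - 1) = _
  rw [add_sub_cancel_right, show (1 : ℤ) - (n + 1) = -n by ring]

lemma derivP_mul (x y : LS) : derivP (x * y) = derivP x * y + x * derivP y := by
  simp only [derivP_eq_single_mul_euler, euler_mul]
  ring

lemma derivP_add (x y : LS) : derivP (x + y) = derivP x + derivP y := by
  ext m : 2
  exact smul_add _ _ _

lemma derivP_one : derivP 1 = 0 := by
  ext m : 2
  show (1 - m) • (1 : LS).coeff (m - 1) = 0
  rcases eq_or_ne m 1 with rfl | hm
  · rw [sub_self, zero_smul]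
  · rw [coeff_one, if_neg (sub_ne_zero.mpr hm), smul_zero]

lemma derivP_pow_succ (x : LS) (n : ℕ) : derivP (x ^ (n + 1)) = (n + 1) • (x ^ n * derivP x) := by
  induction n with
  | zero => simp
  | succ n ih =>
    rw [pow_succ, derivP_mul, ih, add_smul, one_smul, pow_succ]
    ring

lemma pres_derivP (A : LS) : pres (derivP A) = 0 := by
  show ((1 : ℤ) - 1) • A.coeff (1 - 1) = 0
  rw [sub_self, zero_smul]

lemma pres_mul_derivP (x y : LS) : pres (x * derivP y) = -pres (derivP x * y) := by
  rw [eq_neg_iff_add_eq_zero, add_comm, ← pres_add, ← derivP_mul, pres_derivP]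

lemma pres_pow_mul_derivP_pow (x : LS) (a b : ℕ) : pres (x ^ a * derivP (x ^ b)) = 0 := by
  cases b with
  | zero => rw [pow_zero, derivP_one, mul_zero]; rfl
  | succ n =>
    have h : (a + n + 1) • pres (x ^ (a + n) * derivP x) = 0 := by
      rw [← pres_nsmul, ← derivP_pow_succ, pres_derivP]
    rw [derivP_pow_succ, mul_smul_comm, pres_nsmul, ← mul_assoc, ← pow_add,
      (smul_eq_zero.mp h).resolve_left (by omega), smul_zero]

lemma pres_mul_eq_zero {x y : LS} (h : ∀ a b, a + b = 1 → x.coeff a = 0 ∨ y.coeff b = 0) :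
    pres (x * y) = 0 := by
  refine (coeff_mul (a := 1)).trans (sum_eq_zero fun ab hab => ?_)
  obtain ⟨hx, hy, hab⟩ := mem_antidiagonal.mp hab
  exact (h _ _ hab).elim (absurd · hx) (absurd · hy)

lemma coeff_plus_of_pos (A : LS) {n : ℤ} (hn : 0 < n) : (plus A).coeff n = 0 :=
  if_neg hn.not_ge

lemma coeff_sub_plus_of_nonpos (A : LS) {n : ℤ} (hn : n ≤ 0) : (A - plus A).coeff n = 0 := by
  rw [coeff_sub, show (plus A).coeff n = A.coeff n from if_pos hn, sub_self]

lemma coeff_derivP_plus_of_pos (A : LS) {n : ℤ} (hn : 0 < n) : (derivP (plus A)).coeff n = 0 := by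
  show (1 - n) • (plus A).coeff (n - 1) = 0
  rcases (show 1 ≤ n by omega).eq_or_lt with rfl | hn
  · rw [sub_self, zero_smul]
  · rw [coeff_plus_of_pos A (by omega), smul_zero]

lemma coeff_derivP_sub_plus_of_nonpos (A : LS) {n : ℤ} (hn : n ≤ 0) :
    (derivP (A - plus A)).coeff n = 0 := by
  show (1 - n) • (A - plus A).coeff (n - 1) = 0
  rw [coeff_sub_plus_of_nonpos A (by omega), smul_zero]

lemma derivP_eq_derivP_plus_add (A : LS) : derivP A = derivP (plus A) + derivP (A - plus A) := by
  rw [← derivP_add, add_sub_cancel]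

lemma pres_plus_mul_derivP (A B : LS) :
    pres (plus B * derivP A) = pres (plus A * derivP B) - pres (A * derivP B) := by
  have hplus : pres (plus B * derivP (plus A)) = 0 := pres_mul_eq_zero fun a b hab => by
    by_cases ha : 0 < a
    · exact .inl (coeff_plus_of_pos B ha)
    · exact .inr (coeff_derivP_plus_of_pos A (by omega))
  have hminus : pres (derivP (B - plus B) * (A - plus A)) = 0 := pres_mul_eq_zero fun a b hab => by
    by_cases ha : a ≤ 0
    · exact .inl (coeff_derivP_sub_plus_of_nonpos B ha)
    · exact .inr (coeff_sub_plus_of_nonpos A (by omega))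
  calc pres (plus B * derivP A) = pres (plus B * derivP (A - plus A)) := by
        rw [derivP_eq_derivP_plus_add A, mul_add, pres_add, hplus, zero_add]
    _ = -pres (derivP (plus B) * (A - plus A)) := pres_mul_derivP _ _
    _ = -pres (derivP B * (A - plus A)) := by
        rw [derivP_eq_derivP_plus_add B, add_mul, pres_add, hminus, add_zero]
    _ = pres (plus A * derivP B) - pres (A * derivP B) := by
        rw [mul_sub, pres_sub, mul_comm (derivP B), mul_comm (derivP B)]
        ring

theorem statement9_general (i j : ℕ) : Rpq i j = Rpq j i := by
  rw [Rpq, Rpq, pres_plus_mul_derivP, pres_pow_mul_derivP_pow, sub_zero]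

/-- `R_{i,j} = R_{j,i}` for all `i, j ≥ 1`. -/
theorem statement9 (i j : ℕ) (hi : 1 ≤ i) (hj : 1 ≤ j) : Rpq i j = Rpq j i :=
  statement9_general i j
end
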